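/- arXiv:1804.01782 — 2 statements merged into one kernel-verified Lean document; each statement's English description precedes it below -/
import Mathlib

section
/- Let N ≥ 2, α ∈ (0,1), and let k ∈ ℕ^{N-1} with k ≠ 0. Define e_k : ℝ^{N-1} → ℝ by e_k(s) = ∏_{i=1}^{N-1} cos(k_i s_i). Then the function t ↦ (1 − e_k(t))/|t|^{N+α} is Lebesgue integrable on ℝ^{N-1}, and for every s ∈ ℝ^{N-1} the principal value lim_{ε→0⁺} ∫_{{t : |t| ≥ ε}} (e_k(s) − e_k(s−t))/|t|^{N+α} dt exists and equals e_k(s) · ∫_{ℝ^{N-1}} (1 − e_k(t))/|t|^{N+α} dt. -/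
open MeasureTheory Real Filter Topology

noncomputable section

abbrev ES (m : ℕ) : Type := EuclideanSpace ℝ (Fin (m + 1))

/-- `e_k(s) = ∏ᵢ cos(kᵢ sᵢ)`. -/
def ek {m : ℕ} (k : Fin (m + 1) → ℕ) (s : ES m) : ℝ :=
  ∏ i, Real.cos ((k i : ℝ) * s i)

/-! Since `0 ≤ 1 - e_k(t) ≤ (|k|²/2) |t|²` and `1 - e_k ≤ 2`, the integrand is dominated by
`|t|^{-(N-2+α)}` near the origin and by `|t|^{-(N+α)}` at infinity, both integrable on
`ℝ^{N-1}`. For the principal value, average `e_k(s - t)` over the `2^{N-1}` coordinate sign flips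
of `t`: they preserve Lebesgue measure and `|t|`, and `cos(a - b) + cos(a + b) = 2 cos a cos b`
turns the average into `e_k(s) e_k(t)`. Hence the integral over `{|t| ≥ ε}` is
`e_k(s) ∫_{|t| ≥ ε} (1 - e_k(t))/|t|^{N+α}`, and `ε → 0⁺` is dominated convergence. -/

open Metric Set

section RpowDecay

variable {E F : Type*} [NormedAddCommGroup E] [NormedSpace ℝ E] [FiniteDimensional ℝ E]
  [MeasurableSpace E] [BorelSpace E] [NormedAddCommGroup F] {μ : Measure E} [μ.IsAddHaarMeasure]

lemma integrableOn_compl_ball_of_norm_le_rpow (hd : 1 ≤ Module.finrank ℝ E) {f : E → F}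
    {C α r : ℝ} (hα : Module.finrank ℝ E < α) (hr : 0 < r)
    (h_decay : ∀ᵐ x ∂μ.restrict (ball 0 r)ᶜ, ‖f x‖ ≤ C * ‖x‖ ^ (-α))
    (h_meas : AEStronglyMeasurable f μ) :
    IntegrableOn f (ball 0 r)ᶜ μ := by
  have : Nontrivial E := Module.nontrivial_of_finrank_pos (R := ℝ) (by omega)
  set g : ℝ → ℝ := (Ici r).indicator fun y ↦ C * y ^ (-α)
  have hg : Integrable (fun x : E ↦ g ‖x‖) μ := by
    rw [integrable_fun_norm_addHaar μ]
    have h_rpow : IntegrableOn (fun y ↦ C * y ^ ((Module.finrank ℝ E : ℝ) - 1 - α)) (Ici r) :=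
      ((integrableOn_Ici_iff_integrableOn_Ioi).mpr
        (integrableOn_Ioi_rpow_of_lt (by linarith) hr)).const_mul C
    rw [← integrable_indicator_iff measurableSet_Ici] at h_rpow
    refine h_rpow.integrableOn.congr_fun (fun y (hy : 0 < y) ↦ ?_) measurableSet_Ioi
    by_cases hyr : y ∈ Ici r
    · simp only [g, indicator_of_mem hyr, smul_eq_mul]
      rw [← Real.rpow_natCast, mul_left_comm, ← Real.rpow_add hy]
      congr 3
      rw [Nat.cast_sub hd]; push_cast; ring
    · simp [g, hyr]
  refine Integrable.mono' (hg.integrableOn.congr_fun (fun x hx ↦ ?_) measurableSet_ball.compl)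
    h_meas.restrict h_decay
  have : r ≤ ‖x‖ := by simpa using hx
  simp [g, this]

lemma integrable_of_norm_le_rpow_of_norm_le_rpow (hd : 1 ≤ Module.finrank ℝ E) {f : E → F}
    {C D a b : ℝ} (ha : a < Module.finrank ℝ E) (hb : Module.finrank ℝ E < b)
    (h_zero : ∀ᵐ x ∂μ, ‖f x‖ ≤ C * ‖x‖ ^ (-a)) (h_infty : ∀ᵐ x ∂μ, ‖f x‖ ≤ D * ‖x‖ ^ (-b))
    (h_meas : AEStronglyMeasurable f μ) :
    Integrable f μ := by
  rw [← integrableOn_univ, ← union_compl_self (ball 0 1)]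
  exact (integrableOn_ball_of_norm_le_rpow hd ha (ae_restrict_of_ae h_zero) h_meas).union
    (integrableOn_compl_ball_of_norm_le_rpow hd hb one_pos (ae_restrict_of_ae h_infty) h_meas)

end RpowDecay

lemma tendsto_setIntegral_compl_ball_nhdsGT_zero {E F : Type*} [NormedAddCommGroup E]
    [MeasurableSpace E] [OpensMeasurableSpace E] [NormedAddCommGroup F] [NormedSpace ℝ F]
    {μ : Measure E} [NullSingletonClass μ] {f : E → F} (hf : Integrable f μ) :
    Tendsto (fun ε ↦ ∫ x in (ball 0 ε)ᶜ, f x ∂μ) (𝓝[>] 0) (𝓝 (∫ x, f x ∂μ)) := by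
  simp_rw [← integral_indicator measurableSet_ball.compl]
  refine tendsto_integral_filter_of_dominated_convergence (fun x ↦ ‖f x‖)
    (.of_forall fun _ ↦ hf.aestronglyMeasurable.indicator measurableSet_ball.compl)
    (.of_forall fun _ ↦ .of_forall fun _ ↦ norm_indicator_le_norm_self _ _) hf.norm ?_
  filter_upwards [compl_mem_ae_iff.mpr (measure_singleton (0 : E))] with x (hx : x ≠ 0)
  refine tendsto_const_nhds.congr' ?_
  filter_upwards [Ioo_mem_nhdsGT (norm_pos_iff.mpr hx)] with ε hε
  have : x ∈ (ball 0 ε)ᶜ := by simpa using hε.2.le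
  exact (indicator_of_mem this f).symm

lemma one_sub_prod_le_sum_one_sub {ι : Type*} (s : Finset ι) {f : ι → ℝ}
    (hf : ∀ i ∈ s, |f i| ≤ 1) : 1 - ∏ i ∈ s, f i ≤ ∑ i ∈ s, (1 - f i) := by
  classical
  induction s using Finset.induction_on with
  | empty => simp
  | insert a s ha ih =>
    rw [Finset.prod_insert ha, Finset.sum_insert ha]
    have hfa := abs_le.mp (hf a (Finset.mem_insert_self a s))
    have hprod := abs_le.mp (Finset.abs_prod s f ▸
      Finset.prod_le_one (fun i _ ↦ abs_nonneg _) fun i hi ↦ hf i (Finset.mem_insert_of_mem hi))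
    have := ih fun i hi ↦ hf i (Finset.mem_insert_of_mem hi)
    nlinarith

def EuclideanSpace.signFlip {ι : Type*} [Fintype ι] (σ : ι → Bool) :
    EuclideanSpace ℝ ι ≃ₗᵢ[ℝ] EuclideanSpace ℝ ι :=
  LinearIsometryEquiv.piLpCongrRight 2 fun i ↦
    if σ i then LinearIsometryEquiv.neg ℝ else LinearIsometryEquiv.refl ℝ ℝ

lemma EuclideanSpace.signFlip_apply {ι : Type*} [Fintype ι] (σ : ι → Bool)
    (t : EuclideanSpace ℝ ι) (i : ι) : signFlip σ t i = if σ i then -t i else t i := by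
  by_cases h : σ i <;> simp [signFlip, h]

open EuclideanSpace

section CosineProduct

variable {m : ℕ} (k : Fin (m + 1) → ℕ)

lemma continuous_ek : Continuous (ek (m := m) k) := by
  unfold ek
  fun_prop

lemma abs_ek_le_one (s : ES m) : |ek k s| ≤ 1 := by
  rw [ek, Finset.abs_prod]
  exact Finset.prod_le_one (fun _ _ ↦ abs_nonneg _) fun _ _ ↦ abs_cos_le_one _

lemma ek_zero : ek k (0 : ES m) = 1 := by
  simp [ek]

lemma one_sub_ek_le (t : ES m) : 1 - ek k t ≤ (∑ i, (k i : ℝ) ^ 2) / 2 * ‖t‖ ^ 2 := by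
  have hcoord (i : Fin (m + 1)) : t i ^ 2 ≤ ‖t‖ ^ 2 := by
    simpa only [sq_abs, Real.norm_eq_abs] using
      pow_le_pow_left₀ (norm_nonneg _) (PiLp.norm_apply_le t i) 2
  calc 1 - ek k t ≤ ∑ i, (1 - cos ((k i : ℝ) * t i)) :=
        one_sub_prod_le_sum_one_sub _ fun _ _ ↦ abs_cos_le_one _
    _ ≤ ∑ i, (k i : ℝ) ^ 2 / 2 * ‖t‖ ^ 2 := by
        refine Finset.sum_le_sum fun i _ ↦ ?_
        have := one_sub_sq_div_two_le_cos (x := (k i : ℝ) * t i)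
        have := mul_le_mul_of_nonneg_left (hcoord i) (sq_nonneg (k i : ℝ))
        nlinarith
    _ = (∑ i, (k i : ℝ) ^ 2) / 2 * ‖t‖ ^ 2 := by rw [← Finset.sum_mul, Finset.sum_div]

lemma integrable_one_sub_ek_div_rpow {p : ℝ} (hp : (m : ℝ) + 1 < p) (hp' : p < m + 3) :
    Integrable (fun t : ES m ↦ (1 - ek k t) / ‖t‖ ^ p) := by
  have hd : Module.finrank ℝ (ES m) = m + 1 := finrank_euclideanSpace_fin
  have hdiv (t : ES m) : ‖(1 - ek k t) / ‖t‖ ^ p‖ = (1 - ek k t) * ‖t‖ ^ (-p) := by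
    rw [rpow_neg (norm_nonneg _), ← div_eq_mul_inv, norm_div, norm_of_nonneg, norm_of_nonneg]
    exacts [by positivity, by linarith [(abs_le.mp (abs_ek_le_one k t)).2]]
  refine integrable_of_norm_le_rpow_of_norm_le_rpow (C := (∑ i, (k i : ℝ) ^ 2) / 2) (D := 2)
    (a := p - 2) (by omega) (by rw [hd]; push_cast; linarith) (by rw [hd]; push_cast; exact hp)
    (.of_forall fun t ↦ ?_) (.of_forall fun t ↦ ?_) ?_
  · rw [hdiv]
    rcases eq_or_ne t 0 with rfl | ht
    · simp only [ek_zero, sub_self, zero_mul]; positivity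
    · calc (1 - ek k t) * ‖t‖ ^ (-p)
          ≤ (∑ i, (k i : ℝ) ^ 2) / 2 * ‖t‖ ^ (2 : ℝ) * ‖t‖ ^ (-p) := by
            gcongr
            exact_mod_cast one_sub_ek_le k t
        _ = (∑ i, (k i : ℝ) ^ 2) / 2 * ‖t‖ ^ (-(p - 2)) := by
            rw [mul_assoc, ← rpow_add (norm_pos_iff.mpr ht)]; ring_nf
  · rw [hdiv]
    gcongr
    linarith [(abs_le.mp (abs_ek_le_one k t)).1]
  · exact (continuous_const.sub (continuous_ek k)).measurable.div
      (continuous_norm.rpow_const fun _ ↦ Or.inr (by linarith)).measurable |>.aestronglyMeasurable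

lemma sum_ek_sub_signFlip (s t : ES m) :
    ∑ σ, ek k (s - signFlip σ t) = 2 ^ (m + 1) * (ek k s * ek k t) := by
  have hcoord (i : Fin (m + 1)) :
      ∑ b : Bool, cos ((k i : ℝ) * (s i - if b then -t i else t i)) =
        2 * (cos ((k i : ℝ) * s i) * cos ((k i : ℝ) * t i)) := by
    simp only [Fintype.sum_bool, if_true, Bool.false_eq_true, if_false, mul_sub, mul_neg,
      cos_sub, cos_neg, sin_neg]
    ring
  simp only [ek, PiLp.sub_apply, signFlip_apply]
  rw [← Fintype.prod_sum (κ := fun _ ↦ Bool)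
      (fun i b ↦ cos ((k i : ℝ) * (s i - if b then -t i else t i))),
    Finset.prod_congr rfl fun i _ ↦ hcoord i, Finset.prod_mul_distrib, Finset.prod_mul_distrib,
    Finset.prod_const, Finset.card_univ, Fintype.card_fin]

lemma setIntegral_ek_sub_mul (s : ES m) {A : Set (ES m)} (hA : ∀ σ, signFlip σ ⁻¹' A = A)
    {w : ES m → ℝ} (hw : ∀ σ t, w (signFlip σ t) = w t) (hwA : IntegrableOn w A) :
    ∫ t in A, ek k (s - t) * w t = ek k s * ∫ t in A, ek k t * w t := by
  have hflip (σ : Fin (m + 1) → Bool) :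
      ∫ t in A, ek k (s - signFlip σ t) * w t = ∫ t in A, ek k (s - t) * w t := by
    simpa only [hA σ, hw σ] using (signFlip σ).measurePreserving.setIntegral_preimage_emb
      (signFlip σ).toHomeomorph.measurableEmbedding (fun u ↦ ek k (s - u) * w u) A
  have hint (σ : Fin (m + 1) → Bool) : IntegrableOn (fun t ↦ ek k (s - signFlip σ t) * w t) A :=
    hwA.bdd_mul (c := 1)
      ((continuous_ek k).comp (continuous_const.sub (signFlip σ).continuous)).aestronglyMeasurable
      (.of_forall fun t ↦ abs_ek_le_one k _)
  suffices (2 : ℝ) ^ (m + 1) * ∫ t in A, ek k (s - t) * w t =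
      2 ^ (m + 1) * (ek k s * ∫ t in A, ek k t * w t) from mul_left_cancel₀ (by positivity) this
  calc (2 : ℝ) ^ (m + 1) * ∫ t in A, ek k (s - t) * w t
      = ∑ σ, ∫ t in A, ek k (s - signFlip σ t) * w t := by
        simp [hflip, Finset.card_univ]
    _ = ∫ t in A, (∑ σ, ek k (s - signFlip σ t)) * w t := by
        rw [← integral_finsetSum _ fun σ _ ↦ hint σ]
        simp only [Finset.sum_mul]
    _ = 2 ^ (m + 1) * (ek k s * ∫ t in A, ek k t * w t) := by
        simp only [sum_ek_sub_signFlip, ← integral_const_mul]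
        congr 1 with t
        ring

lemma setIntegral_ek_sub_ek_sub_div {p : ℝ} (hp : (m : ℝ) + 1 < p) {ε : ℝ} (hε : 0 < ε)
    (s : ES m) :
    ∫ t in (ball 0 ε)ᶜ, (ek k s - ek k (s - t)) / ‖t‖ ^ p =
      ek k s * ∫ t in (ball 0 ε)ᶜ, (1 - ek k t) / ‖t‖ ^ p := by
  have hw : IntegrableOn (fun t : ES m ↦ (‖t‖ ^ p)⁻¹) (ball 0 ε)ᶜ := by
    refine integrableOn_compl_ball_of_norm_le_rpow (C := 1) (α := p) (by simp) ?_ hε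
      (.of_forall fun t ↦ ?_) ?_
    · rw [finrank_euclideanSpace_fin]; push_cast; exact hp
    · rw [one_mul, rpow_neg (norm_nonneg _), norm_inv, norm_of_nonneg (by positivity)]
    · exact (continuous_norm.rpow_const fun _ ↦ Or.inr (by linarith)).measurable.inv
        |>.aestronglyMeasurable
  have hek : IntegrableOn (fun t ↦ ek k t * (‖t‖ ^ p)⁻¹) (ball 0 ε)ᶜ :=
    hw.bdd_mul (c := 1) (continuous_ek k).aestronglyMeasurable
      (.of_forall fun t ↦ abs_ek_le_one k t)
  have hek_sub : IntegrableOn (fun t ↦ ek k (s - t) * (‖t‖ ^ p)⁻¹) (ball 0 ε)ᶜ :=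
    hw.bdd_mul (c := 1) ((continuous_ek k).comp (continuous_sub_left s)).aestronglyMeasurable
      (.of_forall fun t ↦ abs_ek_le_one k _)
  have hA (σ : Fin (m + 1) → Bool) : signFlip σ ⁻¹' (ball 0 ε)ᶜ = (ball 0 ε)ᶜ := by
    ext t; simp
  simp only [div_eq_mul_inv, sub_mul, one_mul]
  rw [integral_sub (hw.const_mul _) hek_sub, integral_sub hw hek, integral_const_mul,
    setIntegral_ek_sub_mul k s hA (fun σ t ↦ by simp) hw]
  ring

end CosineProduct

theorem statement_3_general (m : ℕ) (α : ℝ) (hα : α ∈ Set.Ioo (0 : ℝ) 1)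
    (k : Fin (m + 1) → ℕ) :
    Integrable (fun t : ES m => (1 - ek k t) / ‖t‖ ^ ((m : ℝ) + 2 + α)) ∧
      ∀ s : ES m,
        Tendsto
          (fun ε : ℝ => ∫ t in {t : ES m | ε ≤ ‖t‖},
            (ek k s - ek k (s - t)) / ‖t‖ ^ ((m : ℝ) + 2 + α))
          (𝓝[>] (0 : ℝ))
          (𝓝 (ek k s * ∫ t : ES m, (1 - ek k t) / ‖t‖ ^ ((m : ℝ) + 2 + α))) := by
  obtain ⟨hα0, hα1⟩ := hα
  have hp : (m : ℝ) + 1 < m + 2 + α := by linarith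
  have hf := integrable_one_sub_ek_div_rpow k hp (by linarith)
  refine ⟨hf, fun s ↦ ?_⟩
  have hA (ε : ℝ) : {t : ES m | ε ≤ ‖t‖} = (ball 0 ε)ᶜ := by ext t; simp
  simp only [hA]
  refine ((tendsto_setIntegral_compl_ball_nhdsGT_zero hf).const_mul (ek k s)).congr' ?_
  filter_upwards [self_mem_nhdsWithin] with ε hε
  exact (setIntegral_ek_sub_ek_sub_div k hp hε s).symm

/-- for `k ≠ 0`, the function `t ↦ (1 - e_k(t))/|t|^{N+α}` is integrable on
`ℝ^{N-1}`, and for every `s` the principal value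
`lim_{ε→0⁺} ∫_{|t|≥ε} (e_k(s) - e_k(s-t))/|t|^{N+α} dt` exists and equals
`e_k(s) ∫ (1 - e_k(t))/|t|^{N+α} dt`.  Here `N = m + 2 ≥ 2`. -/
theorem statement_3 (m : ℕ) (α : ℝ) (hα : α ∈ Set.Ioo (0 : ℝ) 1)
    (k : Fin (m + 1) → ℕ) (hk : k ≠ 0) :
    Integrable (fun t : ES m => (1 - ek k t) / ‖t‖ ^ ((m : ℝ) + 2 + α)) ∧
      ∀ s : ES m,
        Tendsto
          (fun ε : ℝ => ∫ t in {t : ES m | ε ≤ ‖t‖},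
            (ek k s - ek k (s - t)) / ‖t‖ ^ ((m : ℝ) + 2 + α))
          (𝓝[>] (0 : ℝ))
          (𝓝 (ek k s * ∫ t : ES m, (1 - ek k t) / ‖t‖ ^ ((m : ℝ) + 2 + α))) :=
  statement_3_general m α hα k
end
end

section
/- Let N ≥ 2, α ∈ (0,1), R > 0, and let θ ∈ ℝ^{N-1} with |θ| = 1. Then ∫_{ℝ^{N-1}} (1 + ∏_{i=1}^{N-1} cos(t_i θ_i)) (|t|² + 4R²)^{−(N+α)/2} dt = ∫_{ℝ^{N-1}} (1 + cos t₁) (|t|² + 4R²)^{−(N+α)/2} dt, both integrals being absolutely convergent; in particular the left-hand side depends only on R and not on the unit vector θ. -/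
/-!
Averaging over the `2^(N-1)` sign changes `ε`, the product-to-sum formula gives
`∏ cos (tᵢ θᵢ) = 2^{-(N-1)} ∑_ε cos ⟪t, εθ⟫`, and every `εθ` is again a unit vector.
The weight depends only on `|t|`, so the reflection of `ℝ^{N-1}` exchanging `εθ` and `e₁`
shows that each `∫ cos ⟪t, εθ⟫ w(|t|) dt` equals `∫ cos t₁ w(|t|) dt`.
Integrability holds because, after rescaling `t`, the weight is a multiple of the Japanese
bracket `(1 + |t|²)^{-(N+α)/2}`, and `N + α > N - 1`.
-/

open MeasureTheory Real Filter Topology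

noncomputable section

open RealInnerProductSpace

theorem prod_cos_eq_sum_cos_div {ι : Type*} [Fintype ι] [DecidableEq ι] (a : ι → ℝ) :
    ∏ i, cos (a i) =
      (∑ s : ι → Bool, cos (∑ i, (if s i then 1 else -1) * a i)) / 2 ^ Fintype.card ι := by
  have hcos (x : ℝ) : (cos x : ℂ) =
      (∑ b : Bool, Complex.exp (↑((if b then 1 else -1) * x) * Complex.I)) / 2 := by
    simp [Complex.ofReal_cos, Complex.cos]
  have hprod : (∏ i, cos (a i) : ℂ) = (∑ s : ι → Bool,
      Complex.exp (↑(∑ i, (if s i then 1 else -1) * a i) * Complex.I)) / 2 ^ Fintype.card ι := by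
    simp_rw [hcos, Finset.prod_div_distrib, Finset.prod_univ_sum, Fintype.piFinset_univ,
      ← Complex.exp_sum, Complex.ofReal_sum, Finset.sum_mul, Finset.prod_const, Finset.card_univ]
  have hre := congrArg Complex.re hprod
  rw [← Complex.ofReal_prod, ← Complex.ofReal_ofNat, ← Complex.ofReal_pow] at hre
  simpa only [Complex.ofReal_re, Complex.div_ofReal_re, Complex.re_sum,
    Complex.exp_ofReal_mul_I_re] using hre

section InnerProductSpace

variable {E : Type*} [NormedAddCommGroup E] [InnerProductSpace ℝ E] [FiniteDimensional ℝ E]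
  [MeasurableSpace E] [BorelSpace E]

theorem integral_comp_inner_norm_eq_of_norm_eq {F : Type*} [NormedAddCommGroup F]
    [NormedSpace ℝ F] (f : ℝ → ℝ → F) {u v : E} (h : ‖u‖ = ‖v‖) :
    ∫ t, f ⟪t, u⟫ ‖t‖ = ∫ t, f ⟪t, v⟫ ‖t‖ := by
  set ρ := Submodule.reflection (ℝ ∙ (u - v))ᗮ
  have hρv : ρ v = u := by rw [← Submodule.reflection_sub h, Submodule.reflection_reflection]
  rw [← ρ.measurePreserving.integral_comp ρ.toHomeomorph.measurableEmbedding]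
  simp_rw [← hρv, ρ.inner_map_map, ρ.norm_map]

theorem integrable_rpow_neg_norm_sq_add {p c : ℝ} (hp : (Module.finrank ℝ E : ℝ) < p)
    (hc : 0 < c) : Integrable fun t : E => (‖t‖ ^ 2 + c) ^ (-(p / 2)) := by
  have hscaled := ((integrable_rpow_neg_one_add_norm_sq (E := E) (μ := volume) hp).comp_smul
    (inv_ne_zero (sqrt_pos.2 hc).ne')).const_mul (c ^ (-(p / 2)))
  refine hscaled.congr (Eventually.of_forall fun t => ?_)
  dsimp only
  rw [norm_smul, mul_pow, norm_inv, norm_of_nonneg (sqrt_nonneg c), inv_pow, sq_sqrt hc.le,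
    neg_div, ← mul_rpow hc.le (by positivity), mul_add, mul_one, mul_inv_cancel_left₀ hc.ne',
    add_comm]

end InnerProductSpace

section EuclideanSpace

variable {ι : Type*} [Fintype ι] [DecidableEq ι] {g : ℝ → ℝ}

theorem integral_prod_cos_mul_eq_integral_cos_inner_mul
    (hg : Integrable fun t : EuclideanSpace ℝ ι => g ‖t‖) (θ : EuclideanSpace ℝ ι) :
    ∫ t : EuclideanSpace ℝ ι, (∏ i, cos (t i * θ i)) * g ‖t‖ = ∫ t, cos ⟪t, θ⟫ * g ‖t‖ := by
  let flip (s : ι → Bool) : EuclideanSpace ℝ ι :=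
    WithLp.toLp 2 fun i => (if s i then 1 else -1) * θ i
  have hflip_norm (s : ι → Bool) : ‖flip s‖ = ‖θ‖ := by
    simp only [EuclideanSpace.norm_eq, flip, norm_mul]
    congr! 3 with i
    split_ifs <;> simp
  have hflip_inner (s : ι → Bool) (t : EuclideanSpace ℝ ι) :
      ⟪t, flip s⟫ = ∑ i, (if s i then 1 else -1) * (t i * θ i) := by
    simp only [flip, PiLp.inner_apply, RCLike.inner_apply, conj_trivial]
    exact Finset.sum_congr rfl fun i _ => by ring
  have hint (v : EuclideanSpace ℝ ι) : Integrable fun t => cos ⟪t, v⟫ * g ‖t‖ :=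
    hg.bdd_mul (c := 1) (by fun_prop) (Eventually.of_forall fun t => abs_cos_le_one _)
  calc ∫ t : EuclideanSpace ℝ ι, (∏ i, cos (t i * θ i)) * g ‖t‖
      = ∫ t, (∑ s, cos ⟪t, flip s⟫ * g ‖t‖) / 2 ^ Fintype.card ι := by
        simp_rw [prod_cos_eq_sum_cos_div, hflip_inner, div_mul_eq_mul_div, Finset.sum_mul]
    _ = (∑ s, ∫ t, cos ⟪t, flip s⟫ * g ‖t‖) / 2 ^ Fintype.card ι := by
        rw [integral_div, integral_finsetSum _ fun s _ => hint _]
    _ = (∑ _s : ι → Bool, ∫ t, cos ⟪t, θ⟫ * g ‖t‖) / 2 ^ Fintype.card ι := by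
        simp_rw [integral_comp_inner_norm_eq_of_norm_eq (fun x r => cos x * g r) (hflip_norm _)]
    _ = ∫ t, cos ⟪t, θ⟫ * g ‖t‖ := by
        rw [Finset.sum_const, Finset.card_univ, Fintype.card_fun, Fintype.card_bool, nsmul_eq_mul]
        field_simp
        push_cast
        ring

theorem integral_cos_inner_mul_eq_integral_cos_apply_mul {θ : EuclideanSpace ℝ ι} (hθ : ‖θ‖ = 1)
    (i : ι) : ∫ t, cos ⟪t, θ⟫ * g ‖t‖ = ∫ t : EuclideanSpace ℝ ι, cos (t i) * g ‖t‖ := by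
  rw [integral_comp_inner_norm_eq_of_norm_eq (fun x r => cos x * g r)
    (v := EuclideanSpace.single i 1) (by simp [hθ])]
  simp [EuclideanSpace.inner_single_right]

end EuclideanSpace

/-- for a unit vector `θ ∈ ℝ^{N-1}` and `R > 0`,
`∫ (1 + ∏ᵢ cos(tᵢθᵢ))(|t|²+4R²)^{-(N+α)/2} dt = ∫ (1 + cos t₁)(|t|²+4R²)^{-(N+α)/2} dt`,
both integrals being absolutely convergent; in particular the left-hand side depends only
on `R` and not on `θ`.  Here `N = m + 2 ≥ 2`. -/
theorem statement_7 (m : ℕ) (α R : ℝ) (hα : α ∈ Set.Ioo (0 : ℝ) 1) (hR : 0 < R)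
    (θ : ES m) (hθ : ‖θ‖ = 1) :
    Integrable (fun t : ES m =>
        (1 + ∏ i, Real.cos (t i * θ i)) * (‖t‖ ^ 2 + 4 * R ^ 2) ^ (-(((m : ℝ) + 2 + α) / 2))) ∧
      Integrable (fun t : ES m =>
        (1 + Real.cos (t 0)) * (‖t‖ ^ 2 + 4 * R ^ 2) ^ (-(((m : ℝ) + 2 + α) / 2))) ∧
      ∫ t : ES m, (1 + ∏ i, Real.cos (t i * θ i)) * (‖t‖ ^ 2 + 4 * R ^ 2) ^ (-(((m : ℝ) + 2 + α) / 2))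
        = ∫ t : ES m, (1 + Real.cos (t 0)) * (‖t‖ ^ 2 + 4 * R ^ 2) ^ (-(((m : ℝ) + 2 + α) / 2)) := by
  set g : ℝ → ℝ := fun r => (r ^ 2 + 4 * R ^ 2) ^ (-(((m : ℝ) + 2 + α) / 2))
  have hg : Integrable fun t : ES m => g ‖t‖ :=
    integrable_rpow_neg_norm_sq_add (by simp; linarith [hα.1]) (by positivity)
  have hprod : Integrable fun t : ES m => (∏ i, cos (t i * θ i)) * g ‖t‖ :=
    hg.bdd_mul (c := 1) (by fun_prop) (Eventually.of_forall fun t => by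
      simpa only [norm_prod] using Finset.prod_le_one (fun _ _ => norm_nonneg _)
        fun _ _ => abs_cos_le_one _)
  have hcos : Integrable fun t : ES m => cos (t 0) * g ‖t‖ :=
    hg.bdd_mul (c := 1) (by fun_prop) (Eventually.of_forall fun t => abs_cos_le_one _)
  simp only [add_mul, one_mul]
  refine ⟨hg.add hprod, hg.add hcos, ?_⟩
  rw [integral_add hg hprod, integral_add hg hcos,
    integral_prod_cos_mul_eq_integral_cos_inner_mul hg,
    integral_cos_inner_mul_eq_integral_cos_apply_mul hθ 0]
end
end
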